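/- (Corollary: completely deviating subsystem.) Let C, B, B' be pairwise disjoint systems in the universe U, let the original system be A = C ∪ B and the altered system be A' = C ∪ B', with priming bijection equal to the identity on C and a bijection g : B → B' on B (the subsystem B deviates completely and behaves as the unrelated system B'). Suppose H(C ∪ B ∪ B') = H(C) + H(B ∪ B') and H(B ∪ B') = H(B) + H(B'), and that I on C ∪ B ∪ B' is nonnegative. Then for every scale k ≥ 1, the complexity of the change equals the complexity of the altered subsystem: C_{A'|A}(k) = C_{B'}(k). -/
import Mathlib


open Finset

variable {U : Type*}

/-- `I` solves the defining linear system of the information function of the system `A`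
(with entropy function `H`): for every nonempty `B ⊆ A`, the sum of `I S` over all
nonempty `S ⊆ A` with `S ∩ B ≠ ∅` equals `H B`. -/
def IsInfoFn [DecidableEq U] (H : Finset U → ℝ) (A : Finset U) (I : Finset U → ℝ) : Prop :=
  ∀ B : Finset U, B ⊆ A → B.Nonempty →
    ∑ S ∈ A.powerset.filter (fun S => S.Nonempty ∧ (S ∩ B).Nonempty), I S = H B

/-- The complexity of the system `A` at scale `k` (with information function `I`):
the sum of `I S` over all nonempty `S ⊆ A` with `|S| ≥ k`. -/
def complexityAt (A : Finset U) (I : Finset U → ℝ) (k : ℕ) : ℝ :=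
  ∑ S ∈ A.powerset.filter (fun S => S.Nonempty ∧ k ≤ S.card), I S

/-- Conditional information `I(f(S)|S)` of a dependency `S` of `A`, relative to the primed
system `A'` with priming map `f`, computed with the information function `IJ` of the joint
system `A ∪ A'`: the sum of `IJ T` over all nonempty `T ⊆ A ∪ A'` with `T ∩ A' = f(S)`
and `T ∩ A ≠ S`. -/
def condInfo [DecidableEq U] (A A' : Finset U) (f : U → U) (IJ : Finset U → ℝ)
    (S : Finset U) : ℝ :=
  ∑ T ∈ (A ∪ A').powerset.filter
      (fun T => T.Nonempty ∧ T ∩ A' = S.image f ∧ T ∩ A ≠ S), IJ T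

/-- The noise complexity `C_{A'|A}(k)`: the sum of the conditional informations
`I(f(S)|S)` over all nonempty `S ⊆ A` with `|S| ≥ k`. -/
def noiseComplexityAt [DecidableEq U] (A A' : Finset U) (f : U → U) (IJ : Finset U → ℝ)
    (k : ℕ) : ℝ :=
  ∑ S ∈ A.powerset.filter (fun S => S.Nonempty ∧ k ≤ S.card), condInfo A A' f IJ S

lemma filter_inter_self [DecidableEq U] (A : Finset U) :
    A.powerset.filter (fun S => S.Nonempty ∧ (S ∩ A).Nonempty)
      = A.powerset.filter (fun S => S.Nonempty) := by
  apply Finset.filter_congr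
  intro S hS
  rw [mem_powerset] at hS
  rw [inter_eq_left.mpr hS]
  simp

lemma info_total [DecidableEq U] (H : Finset U → ℝ) (A : Finset U) (I : Finset U → ℝ)
    (hI : IsInfoFn H A I) (hA : A.Nonempty) :
    ∑ S ∈ A.powerset.filter (fun S => S.Nonempty), I S = H A := by
  rw [← filter_inter_self]
  exact hI A Subset.rfl hA

lemma info_zero_of_cross [DecidableEq U] (H : Finset U → ℝ) (A : Finset U)
    (I : Finset U → ℝ) (hI : IsInfoFn H A I)
    (hnn : ∀ T : Finset U, T ⊆ A → T.Nonempty → 0 ≤ I T)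
    (D₁ D₂ : Finset U) (h1 : D₁ ⊆ A) (h2 : D₂ ⊆ A) (hn1 : D₁.Nonempty) (hn2 : D₂.Nonempty)
    (hindep : H (D₁ ∪ D₂) = H D₁ + H D₂)
    (T : Finset U) (hT : T ⊆ A) (hT1 : (T ∩ D₁).Nonempty) (hT2 : (T ∩ D₂).Nonempty) :
    I T = 0 := by
  have e1 := hI D₁ h1 hn1
  have e2 := hI D₂ h2 hn2
  have e12 := hI (D₁ ∪ D₂) (union_subset h1 h2) (hn1.mono subset_union_left)
  have key : ∑ S ∈ A.powerset.filter
      (fun S => S.Nonempty ∧ (S ∩ D₁).Nonempty ∧ (S ∩ D₂).Nonempty), I S = 0 := by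
    have expand : ∀ (D : Finset U),
        ∑ S ∈ A.powerset.filter (fun S => S.Nonempty ∧ (S ∩ D).Nonempty), I S
          = ∑ S ∈ A.powerset, if S.Nonempty ∧ (S ∩ D).Nonempty then I S else 0 :=
      fun D => Finset.sum_filter _ _
    have expand2 : ∑ S ∈ A.powerset.filter
        (fun S => S.Nonempty ∧ (S ∩ D₁).Nonempty ∧ (S ∩ D₂).Nonempty), I S
          = ∑ S ∈ A.powerset,
            if S.Nonempty ∧ (S ∩ D₁).Nonempty ∧ (S ∩ D₂).Nonempty then I S else 0 :=
      Finset.sum_filter _ _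
    rw [expand2]
    have comb : ∀ S ∈ A.powerset,
        (if S.Nonempty ∧ (S ∩ D₁).Nonempty ∧ (S ∩ D₂).Nonempty then I S else 0)
        = (if S.Nonempty ∧ (S ∩ D₁).Nonempty then I S else 0)
          + (if S.Nonempty ∧ (S ∩ D₂).Nonempty then I S else 0)
          - (if S.Nonempty ∧ (S ∩ (D₁ ∪ D₂)).Nonempty then I S else 0) := by
      intro S _
      have hun : (S ∩ (D₁ ∪ D₂)).Nonempty ↔ (S ∩ D₁).Nonempty ∨ (S ∩ D₂).Nonempty := by
        rw [inter_union_distrib_left]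
        simp [Finset.nonempty_iff_ne_empty, Finset.union_eq_empty, -not_and, not_and_or]
      by_cases hN : S.Nonempty
      · by_cases hd1 : (S ∩ D₁).Nonempty <;> by_cases hd2 : (S ∩ D₂).Nonempty <;>
          simp [hN, hd1, hd2, hun]
      · simp [hN]
    rw [Finset.sum_congr rfl comb, Finset.sum_sub_distrib, Finset.sum_add_distrib]
    rw [← expand D₁, ← expand D₂, ← expand (D₁ ∪ D₂), e1, e2, e12, hindep]
    ring
  have hmem : T ∈ A.powerset.filter
      (fun S => S.Nonempty ∧ (S ∩ D₁).Nonempty ∧ (S ∩ D₂).Nonempty) := by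
    rw [mem_filter, mem_powerset]
    exact ⟨hT, hT1.mono inter_subset_left, hT1, hT2⟩
  have hpos : ∀ S ∈ A.powerset.filter
      (fun S => S.Nonempty ∧ (S ∩ D₁).Nonempty ∧ (S ∩ D₂).Nonempty), 0 ≤ I S := by
    intro S hS
    rw [mem_filter, mem_powerset] at hS
    exact hnn S hS.1 hS.2.1
  exact (Finset.sum_eq_zero_iff_of_nonneg hpos).mp key T hmem

lemma infoFn_sub_sum [DecidableEq U] (H : Finset U → ℝ) (A : Finset U)
    (I₁ I₂ : Finset U → ℝ) (h1 : IsInfoFn H A I₁) (h2 : IsInfoFn H A I₂)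
    (E : Finset U) (hE : E ⊆ A) :
    ∑ S ∈ E.powerset.filter (fun S => S.Nonempty), (I₁ S - I₂ S) = 0 := by
  rcases (A \ E).eq_empty_or_nonempty with hD | hD
  · -- E = A
    have hEA : E = A := by
      rw [sdiff_eq_empty_iff_subset] at hD
      exact subset_antisymm hE hD
    subst hEA
    rcases E.eq_empty_or_nonempty with h | h
    · subst h; simp [Finset.filter_singleton]
    · rw [Finset.sum_sub_distrib, info_total H E I₁ h1 h, info_total H E I₂ h2 h]
      ring
  · set D := A \ E with hDdef
    have hA : A.Nonempty := hD.mono (sdiff_subset)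
    have hDsub : D ⊆ A := sdiff_subset
    have tot : ∑ S ∈ A.powerset.filter (fun S => S.Nonempty), (I₁ S - I₂ S) = 0 := by
      rw [Finset.sum_sub_distrib, info_total H A I₁ h1 hA, info_total H A I₂ h2 hA]; ring
    have eqD : ∑ S ∈ A.powerset.filter (fun S => S.Nonempty ∧ (S ∩ D).Nonempty),
        (I₁ S - I₂ S) = 0 := by
      rw [Finset.sum_sub_distrib, h1 D hDsub hD, h2 D hDsub hD]; ring
    have split := Finset.sum_filter_add_sum_filter_not
      (A.powerset.filter (fun S => S.Nonempty)) (fun S => (S ∩ D).Nonempty)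
      (fun S => I₁ S - I₂ S)
    rw [Finset.filter_filter, Finset.filter_filter] at split
    have hset : A.powerset.filter (fun S => S.Nonempty ∧ ¬(S ∩ D).Nonempty)
        = E.powerset.filter (fun S => S.Nonempty) := by
      ext S
      simp only [mem_filter, mem_powerset, Finset.not_nonempty_iff_eq_empty,
        ← Finset.disjoint_iff_inter_eq_empty]
      constructor
      · rintro ⟨hSA, hSne, hdisj⟩
        refine ⟨fun x hx => ?_, hSne⟩
        have hxA := hSA hx
        by_contra hxE
        exact (Finset.disjoint_left.mp hdisj hx) (Finset.mem_sdiff.mpr ⟨hxA, hxE⟩)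
      · rintro ⟨hSE, hSne⟩
        refine ⟨hSE.trans hE, hSne, Finset.disjoint_left.mpr fun x hx hxD => ?_⟩
        exact (Finset.mem_sdiff.mp hxD).2 (hSE hx)
    rw [hset, tot, eqD] at split
    linarith

lemma infoFn_unique [DecidableEq U] (H : Finset U → ℝ) (A : Finset U)
    (I₁ I₂ : Finset U → ℝ) (h1 : IsInfoFn H A I₁) (h2 : IsInfoFn H A I₂) :
    ∀ S : Finset U, S ⊆ A → S.Nonempty → I₁ S = I₂ S := by
  suffices h : ∀ n (S : Finset U), S ⊆ A → S.Nonempty → S.card ≤ n → I₁ S = I₂ S by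
    exact fun S hS hne => h S.card S hS hne le_rfl
  intro n
  induction n with
  | zero =>
    intro S _ hne hcard
    exact absurd (Finset.card_eq_zero.mp (Nat.le_zero.mp hcard)) hne.ne_empty
  | succ n ih =>
    intro S hS hne hcard
    have key := infoFn_sub_sum H A I₁ I₂ h1 h2 S hS
    have hmem : S ∈ S.powerset.filter (fun T => T.Nonempty) := by
      simp [hne]
    rw [← Finset.add_sum_erase _ _ hmem] at key
    have hrest : ∑ T ∈ (S.powerset.filter (fun T => T.Nonempty)).erase S,
        (I₁ T - I₂ T) = 0 := by
      apply Finset.sum_eq_zero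
      intro T hT
      have hT' := Finset.mem_of_mem_erase hT
      rw [mem_filter, mem_powerset] at hT'
      have hneq := Finset.ne_of_mem_erase hT
      have hlt : T.card < S.card :=
        Finset.card_lt_card (Finset.ssubset_iff_subset_ne.mpr ⟨hT'.1, hneq⟩)
      have := ih T (hT'.1.trans hS) hT'.2 (by omega)
      linarith
    rw [hrest] at key
    linarith

/-- completely deviating subsystem. Let `C, B, B'` be pairwise disjoint
systems, the original system `A = C ∪ B`, the altered system `A' = C ∪ B'`, with priming
map equal to the identity on `C` and to a bijection `g : B → B'` on `B`.  If
`H(C ∪ B ∪ B') = H C + H(B ∪ B')` and `H(B ∪ B') = H B + H B'`, and the information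
function of the joint system is nonnegative, then for every scale `k ≥ 1` the complexity
of the change equals the complexity of the altered subsystem: `C_{A'|A}(k) = C_{B'}(k)`. -/
theorem noiseComplexity_of_deviating_subsystem [Fintype U] [DecidableEq U]
    (H : Finset U → ℝ) (C B B' : Finset U)
    (hCB : Disjoint C B) (hCB' : Disjoint C B') (hBB' : Disjoint B B')
    (g f : U → U) (hg : Set.BijOn g ↑B ↑B')
    (hfC : ∀ c ∈ C, f c = c) (hfB : ∀ b ∈ B, f b = g b)
    (hindep₁ : H (C ∪ B ∪ B') = H C + H (B ∪ B'))
    (hindep₂ : H (B ∪ B') = H B + H B')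
    (IJ : Finset U → ℝ) (hIJ : IsInfoFn H ((C ∪ B) ∪ (C ∪ B')) IJ)
    (hnn : ∀ T : Finset U, T ⊆ (C ∪ B) ∪ (C ∪ B') → T.Nonempty → 0 ≤ IJ T)
    (IB' : Finset U → ℝ) (hIB' : IsInfoFn H B' IB')
    (k : ℕ) (hk : 1 ≤ k) :
    noiseComplexityAt (C ∪ B) (C ∪ B') f IJ k = complexityAt B' IB' k := by
  set J : Finset U := (C ∪ B) ∪ (C ∪ B') with hJdef
  have hCJ : C ⊆ J := subset_union_left.trans subset_union_left
  have hBJ : B ⊆ J := subset_union_right.trans subset_union_left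
  have hB'J : B' ⊆ J := subset_union_right.trans subset_union_right
  have hgB' : ∀ S : Finset U, S ⊆ B → S.image g ⊆ B' := by
    intro S hS x hx
    rw [Finset.mem_image] at hx
    obtain ⟨b, hb, rfl⟩ := hx
    exact_mod_cast hg.mapsTo (hS hb)
  have himg : ∀ S : Finset U, S ⊆ B → S.image f = S.image g := by
    intro S hS
    exact Finset.image_congr (fun x hx => hfB x (hS hx))
  -- crossing zero C vs B ∪ B'
  have z1 : ∀ T : Finset U, T ⊆ J → (T ∩ C).Nonempty → (T ∩ (B ∪ B')).Nonempty →
      IJ T = 0 := by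
    intro T hT h1 h2
    refine info_zero_of_cross H J IJ hIJ hnn C (B ∪ B') hCJ (union_subset hBJ hB'J)
      (h1.mono inter_subset_right) (h2.mono inter_subset_right) ?_ T hT h1 h2
    rw [← union_assoc]
    exact hindep₁
  have z2 : ∀ T : Finset U, T ⊆ J → (T ∩ B).Nonempty → (T ∩ B').Nonempty →
      IJ T = 0 := by
    intro T hT h1 h2
    exact info_zero_of_cross H J IJ hIJ hnn B B' hBJ hB'J
      (h1.mono inter_subset_right) (h2.mono inter_subset_right) hindep₂ T hT h1 h2
  -- support
  have supp : ∀ T : Finset U, T ⊆ J → IJ T ≠ 0 → T ⊆ C ∨ T ⊆ B ∨ T ⊆ B' := by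
    intro T hT hne
    by_cases h1 : (T ∩ C).Nonempty
    · by_cases h2 : (T ∩ (B ∪ B')).Nonempty
      · exact absurd (z1 T hT h1 h2) hne
      · left
        rw [Finset.not_nonempty_iff_eq_empty, ← Finset.disjoint_iff_inter_eq_empty] at h2
        intro x hx
        have hxJ := hT hx
        simp only [hJdef, Finset.mem_union] at hxJ
        rcases hxJ with (h | h) | (h | h)
        · exact h
        · exact absurd (Finset.mem_union_left B' h) (Finset.disjoint_left.mp h2 hx)
        · exact h
        · exact absurd (Finset.mem_union_right B h) (Finset.disjoint_left.mp h2 hx)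
    · rw [Finset.not_nonempty_iff_eq_empty, ← Finset.disjoint_iff_inter_eq_empty] at h1
      have hTBB' : T ⊆ B ∪ B' := by
        intro x hx
        have hxJ := hT hx
        simp only [hJdef, Finset.mem_union] at hxJ
        rcases hxJ with (h | h) | (h | h)
        · exact absurd h (Finset.disjoint_left.mp h1 hx)
        · exact Finset.mem_union_left _ h
        · exact absurd h (Finset.disjoint_left.mp h1 hx)
        · exact Finset.mem_union_right _ h
      by_cases h2 : (T ∩ B).Nonempty
      · by_cases h3 : (T ∩ B').Nonempty
        · exact absurd (z2 T hT h2 h3) hne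
        · right; left
          rw [Finset.not_nonempty_iff_eq_empty, ← Finset.disjoint_iff_inter_eq_empty] at h3
          intro x hx
          rcases Finset.mem_union.mp (hTBB' hx) with h | h
          · exact h
          · exact absurd h (Finset.disjoint_left.mp h3 hx)
      · right; right
        rw [Finset.not_nonempty_iff_eq_empty, ← Finset.disjoint_iff_inter_eq_empty] at h2
        intro x hx
        rcases Finset.mem_union.mp (hTBB' hx) with h | h
        · exact absurd h (Finset.disjoint_left.mp h2 hx)
        · exact h
  -- IJ restricted to B' is an info function of B'
  have restr : IsInfoFn H B' IJ := by
    intro D hD hDne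
    have hDJ : D ⊆ J := hD.trans hB'J
    rw [← hIJ D hDJ hDne]
    apply Finset.sum_subset
    · exact Finset.filter_subset_filter _ (Finset.powerset_mono.mpr hB'J)
    · intro T hT hT'
      rw [mem_filter, mem_powerset] at hT
      obtain ⟨hTJ, hTne, hTD⟩ := hT
      by_contra hIJT
      rcases supp T hTJ hIJT with h | h | h
      · obtain ⟨x, hx⟩ := hTD
        rw [Finset.mem_inter] at hx
        exact Finset.disjoint_left.mp hCB' (h hx.1) (hD hx.2)
      · obtain ⟨x, hx⟩ := hTD
        rw [Finset.mem_inter] at hx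
        exact Finset.disjoint_left.mp hBB' (h hx.1) (hD hx.2)
      · exact hT' (by rw [mem_filter, mem_powerset]; exact ⟨h, hTne, hTD⟩)
  have hIJB' : ∀ T : Finset U, T ⊆ B' → T.Nonempty → IB' T = IJ T :=
    infoFn_unique H B' IB' IJ hIB' restr
  -- condInfo vanishes when S is not inside B
  have cz : ∀ S : Finset U, S ⊆ C ∪ B → S.Nonempty → ¬ S ⊆ B →
      condInfo (C ∪ B) (C ∪ B') f IJ S = 0 := by
    intro S hS hSne hSB
    apply Finset.sum_eq_zero
    intro T hT
    rw [mem_filter, mem_powerset] at hT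
    obtain ⟨hTJ, hTne, hTA', hTA⟩ := hT
    -- S has an element in C
    obtain ⟨c, hcS, hcB⟩ := Finset.not_subset.mp hSB
    have hcC : c ∈ C := by
      rcases Finset.mem_union.mp (hS hcS) with h | h
      · exact h
      · exact absurd h hcB
    have hcT : c ∈ T ∩ (C ∪ B') := by
      rw [hTA']
      rw [Finset.mem_image]
      exact ⟨c, hcS, hfC c hcC⟩
    rw [Finset.mem_inter] at hcT
    by_contra hIJT
    rcases supp T hTJ hIJT with h | h | h
    · -- T ⊆ C : then S ⊆ C and T = S, contradiction with T ∩ A ≠ S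
      have hSC : S ⊆ C := by
        intro x hx
        rcases Finset.mem_union.mp (hS hx) with hxC | hxB
        · exact hxC
        · exfalso
          have : g x ∈ T := by
            have : g x ∈ S.image f := Finset.mem_image.mpr ⟨x, hx, hfB x hxB⟩
            rw [← hTA'] at this
            exact (Finset.mem_inter.mp this).1
          have hgx : g x ∈ B' := by exact_mod_cast hg.mapsTo hxB
          exact Finset.disjoint_left.mp hCB' (h this) hgx
      have himgS : S.image f = S := by
        have : S.image f = S.image id := Finset.image_congr (fun x hx => hfC x (hSC hx))
        rw [this, Finset.image_id]
      have hTS : T = S := by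
        have hTT : T ∩ (C ∪ B') = T :=
          Finset.inter_eq_left.mpr (h.trans subset_union_left)
        rw [hTT] at hTA'
        rw [hTA', himgS]
      exact hTA (by rw [hTS, Finset.inter_eq_left.mpr hS])
    · -- T ⊆ B : T ∩ (C ∪ B') = ∅ but contains c
      have hd : T ∩ (C ∪ B') = ∅ := by
        rw [← Finset.disjoint_iff_inter_eq_empty]
        exact Finset.disjoint_union_right.mpr ⟨hCB.symm.mono_left h, hBB'.mono_left h⟩
      exact Finset.notMem_empty c (hd ▸ Finset.mem_inter.mpr hcT)
    · -- T ⊆ B' : but c ∈ T and c ∈ C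
      exact Finset.disjoint_left.mp hCB' hcC (h hcT.1)
  -- condInfo S = IJ (image g S) when S ⊆ B
  have cb : ∀ S : Finset U, S ⊆ B → S.Nonempty →
      condInfo (C ∪ B) (C ∪ B') f IJ S = IJ (S.image g) := by
    intro S hS hSne
    apply Finset.sum_eq_single_of_mem
    · rw [mem_filter, mem_powerset]
      have hsub : S.image g ⊆ B' := hgB' S hS
      refine ⟨hsub.trans hB'J, hSne.image g, ?_, ?_⟩
      · rw [Finset.inter_eq_left.mpr (hsub.trans subset_union_right), himg S hS]
      · have hd : S.image g ∩ (C ∪ B) = ∅ := by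
          rw [← Finset.disjoint_iff_inter_eq_empty]
          exact Finset.disjoint_union_right.mpr
            ⟨hCB'.symm.mono_left hsub, hBB'.symm.mono_left hsub⟩
        rw [hd]
        exact fun h => hSne.ne_empty h.symm
    · intro T hT hTne'
      rw [mem_filter, mem_powerset] at hT
      obtain ⟨hTJ, hTne, hTA', hTA⟩ := hT
      rw [himg S hS] at hTA'
      by_contra hIJT
      rcases supp T hTJ hIJT with h | h | h
      · have hTT : T ∩ (C ∪ B') = T := Finset.inter_eq_left.mpr (h.trans subset_union_left)
        rw [hTT] at hTA'
        obtain ⟨x, hx⟩ := hTne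
        exact Finset.disjoint_left.mp hCB' (h hx) (hgB' S hS (hTA' ▸ hx))
      · have hd : T ∩ (C ∪ B') = ∅ := by
          rw [← Finset.disjoint_iff_inter_eq_empty]
          exact Finset.disjoint_union_right.mpr ⟨hCB.symm.mono_left h, hBB'.mono_left h⟩
        rw [hd] at hTA'
        exact (hSne.image g).ne_empty hTA'.symm
      · have hTT : T ∩ (C ∪ B') = T := Finset.inter_eq_left.mpr (h.trans subset_union_right)
        rw [hTT] at hTA'
        exact hTne' hTA'
  -- bijection bookkeeping
  have cardimg : ∀ S : Finset U, S ⊆ B → (S.image g).card = S.card := by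
    intro S hS
    apply Finset.card_image_of_injOn
    exact hg.injOn.mono (by exact_mod_cast hS)
  have hji : ∀ S : Finset U, S ⊆ B → B.filter (fun b => g b ∈ S.image g) = S := by
    intro S hS
    ext b
    simp only [mem_filter, Finset.mem_image]
    constructor
    · rintro ⟨hbB, s, hsS, hgs⟩
      have : s = b := hg.injOn (by exact_mod_cast hS hsS) (by exact_mod_cast hbB) hgs
      exact this ▸ hsS
    · intro hb
      exact ⟨hS hb, b, hb, rfl⟩
  have hij : ∀ T : Finset U, T ⊆ B' → (B.filter (fun b => g b ∈ T)).image g = T := by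
    intro T hT
    ext t
    simp only [Finset.mem_image, mem_filter]
    constructor
    · rintro ⟨b, ⟨hbB, hbT⟩, rfl⟩
      exact hbT
    · intro ht
      obtain ⟨b, hbB, hgb⟩ := hg.surjOn (by exact_mod_cast hT ht)
      exact ⟨b, ⟨by exact_mod_cast hbB, hgb ▸ ht⟩, hgb⟩
  -- assembly
  rw [noiseComplexityAt]
  have step1 : ∑ S ∈ (C ∪ B).powerset.filter (fun S => S.Nonempty ∧ k ≤ S.card),
      condInfo (C ∪ B) (C ∪ B') f IJ S
      = ∑ S ∈ B.powerset.filter (fun S => S.Nonempty ∧ k ≤ S.card),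
        condInfo (C ∪ B) (C ∪ B') f IJ S := by
    symm
    apply Finset.sum_subset
    · exact Finset.filter_subset_filter _ (Finset.powerset_mono.mpr subset_union_right)
    · intro S hSmem hS'
      rw [mem_filter, mem_powerset] at hSmem
      obtain ⟨hSA, hSne, hScard⟩ := hSmem
      apply cz S hSA hSne
      intro hSB
      exact hS' (by rw [mem_filter, mem_powerset]; exact ⟨hSB, hSne, hScard⟩)
  have step2 : ∑ S ∈ B.powerset.filter (fun S => S.Nonempty ∧ k ≤ S.card),
      condInfo (C ∪ B) (C ∪ B') f IJ S
      = ∑ S ∈ B.powerset.filter (fun S => S.Nonempty ∧ k ≤ S.card), IB' (S.image g) := by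
    apply Finset.sum_congr rfl
    intro S hSmem
    rw [mem_filter, mem_powerset] at hSmem
    obtain ⟨hSB, hSne, _⟩ := hSmem
    rw [cb S hSB hSne, hIJB' (S.image g) (hgB' S hSB) (hSne.image g)]
  have step3 : ∑ S ∈ B.powerset.filter (fun S => S.Nonempty ∧ k ≤ S.card), IB' (S.image g)
      = ∑ T ∈ B'.powerset.filter (fun T => T.Nonempty ∧ k ≤ T.card), IB' T := by
    apply Finset.sum_nbij' (i := fun S => S.image g)
      (j := fun T => B.filter (fun b => g b ∈ T))
    · intro S hSmem
      rw [mem_filter, mem_powerset] at hSmem ⊢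
      obtain ⟨hSB, hSne, hScard⟩ := hSmem
      exact ⟨hgB' S hSB, hSne.image g, by rw [cardimg S hSB]; exact hScard⟩
    · intro T hTmem
      rw [mem_filter, mem_powerset] at hTmem ⊢
      obtain ⟨hTB', hTne, hTcard⟩ := hTmem
      have himg' := hij T hTB'
      have hsub : B.filter (fun b => g b ∈ T) ⊆ B := Finset.filter_subset _ _
      refine ⟨hsub, ?_, ?_⟩
      · rw [← Finset.image_nonempty (f := g), himg']
        exact hTne
      · have := cardimg _ hsub
        rw [himg'] at this
        omega
    · intro S hSmem
      rw [mem_filter, mem_powerset] at hSmem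
      exact hji S hSmem.1
    · intro T hTmem
      rw [mem_filter, mem_powerset] at hTmem
      exact hij T hTmem.1
    · intro S _
      rfl
  rw [step1, step2, step3, complexityAt]
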